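/- arXiv:1006.0847 — 3 statements merged into one kernel-verified Lean document; each statement's English description precedes it below -/
import Mathlib

section
/- Let B be a *-bialgebra and for f ∈ Lin(B^{⊗n}, ℂ) define f̃(a₁⊗…⊗a_n) = conjugate of f(a_n*⊗…⊗a₁*). If n is odd and f̃ = εf for ε ∈ {+1,−1}, then (∂f)~ = ε ∂f; if n is even and f̃ = εf, then (∂f)~ = −ε ∂f. -/
open Coalgebra

/-- The Hochschild coboundary of an `n`-cochain `f : B^{⊗n} → ℂ` (in tuple form), for the
`B`-bimodule structure on `ℂ` given by the counit `δ`. -/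
noncomputable def cob {B : Type} [Ring B] [Bialgebra ℂ B] {n : ℕ}
    (f : (Fin n → B) → ℂ) : (Fin (n + 1) → B) → ℂ :=
  fun a =>
    counit (R := ℂ) (a 0) * f (fun j => a j.succ)
      + ∑ i : Fin n, (-1 : ℂ) ^ ((i : ℕ) + 1) *
          f (fun j => if (j : ℕ) < (i : ℕ) then a (Fin.castSucc j)
              else if (j : ℕ) = (i : ℕ) then a (Fin.castSucc i) * a i.succ
              else a j.succ)
      + (-1 : ℂ) ^ (n + 1) *
          (f (fun j => a (Fin.castSucc j)) * counit (R := ℂ) (a (Fin.last n)))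

/-- The conjugate-reversed cochain `f̃(a₁ ⊗ … ⊗ aₙ) = conj (f (aₙ* ⊗ … ⊗ a₁*))`. -/
noncomputable def tilde {B : Type} [Ring B] [StarRing B] {n : ℕ}
    (f : (Fin n → B) → ℂ) : (Fin n → B) → ℂ :=
  fun a => starRingEnd ℂ (f (fun j => star (a (Fin.rev j))))

/-- In a `*`-bialgebra `B` (so that the counit is a `*`-homomorphism), if `n` is odd and
`f̃ = ε f` for a sign `ε ∈ {1, −1}`, then `(∂f)~ = ε ∂f`; if `n` is even and `f̃ = ε f`,
then `(∂f)~ = −ε ∂f`. -/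
theorem stmt3 {B : Type} [Ring B] [Bialgebra ℂ B] [StarRing B]
    (hδ : ∀ a : B, counit (R := ℂ) (star a) = starRingEnd ℂ (counit (R := ℂ) a))
    (n : ℕ) (f : MultilinearMap ℂ (fun _ : Fin n => B) ℂ) (ε : ℂ)
    (hε : ε = 1 ∨ ε = -1)
    (hf : ∀ a, tilde (⇑f) a = ε * f a) :
    (Odd n → ∀ a, tilde (cob (⇑f)) a = ε * cob (⇑f) a) ∧
    (Even n → ∀ a, tilde (cob (⇑f)) a = -ε * cob (⇑f) a) := by
  have hcd : ∀ x : B, starRingEnd ℂ (counit (R := ℂ) (star x)) = counit (R := ℂ) x := by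
    intro x; rw [hδ x]; exact Complex.conj_conj _
  have hcf : ∀ g : Fin n → B, starRingEnd ℂ (f g) = ε * f (fun k => star (g (Fin.rev k))) := by
    intro g
    rw [← hf (fun k => star (g (Fin.rev k)))]
    unfold tilde
    refine congrArg _ (congrArg _ (funext fun j => ?_))
    simp [Fin.rev_rev]
  have key : ∀ a : Fin (n+1) → B, tilde (cob (⇑f)) a
      = ε * ((-1 : ℂ) ^ (n + 1) * cob (⇑f) a) := by
    intro a
    simp only [tilde, cob, map_add, map_mul, map_sum, map_pow, map_neg, map_one]
    rw [hcd (a (Fin.rev 0)), hcd (a (Fin.rev (Fin.last n)))]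
    have hA : starRingEnd ℂ (f fun j => star (a j.succ.rev)) = ε * f (fun k => a (Fin.castSucc k)) := by
      rw [hcf]
      refine congrArg _ (congrArg _ (funext fun k => ?_))
      rw [star_star]
      congr 1
      have hk := k.isLt
      ext
      simp only [Fin.val_rev, Fin.val_succ, Fin.coe_castSucc]
      omega
    have hC : starRingEnd ℂ (f fun j => star (a j.castSucc.rev)) = ε * f (fun k => a k.succ) := by
      rw [hcf]
      refine congrArg _ (congrArg _ (funext fun k => ?_))
      rw [star_star]
      congr 1
      have hk := k.isLt
      ext
      simp only [Fin.val_rev, Fin.val_succ, Fin.coe_castSucc]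
      omega
    have hB : ∀ i : Fin n, starRingEnd ℂ
        (f fun j => if (j : ℕ) < (i : ℕ) then star (a j.castSucc.rev)
            else if (j : ℕ) = (i : ℕ) then star (a i.castSucc.rev) * star (a i.succ.rev)
            else star (a j.succ.rev))
        = ε * f (fun j => if (j : ℕ) < ((Fin.rev i : Fin n) : ℕ) then a (Fin.castSucc j)
            else if (j : ℕ) = ((Fin.rev i : Fin n) : ℕ) then
              a (Fin.castSucc (Fin.rev i)) * a (Fin.rev i).succ
            else a j.succ) := by
      intro i
      rw [hcf]
      refine congrArg _ (congrArg _ (funext fun k => ?_))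
      have hk := k.isLt
      have hi := i.isLt
      rcases lt_trichotomy (k : ℕ) ((Fin.rev i : Fin n) : ℕ) with h | h | h
      · rw [if_neg (by simp only [Fin.val_rev] at h ⊢; omega : ¬ (((Fin.rev k : Fin n) : ℕ) < (i : ℕ))),
          if_neg (by simp only [Fin.val_rev] at h ⊢; omega : ¬ (((Fin.rev k : Fin n) : ℕ) = (i : ℕ))),
          if_pos h, star_star]
        congr 1
        ext
        simp only [Fin.val_rev, Fin.val_succ, Fin.coe_castSucc]
        omega
      · rw [if_neg (by simp only [Fin.val_rev] at h ⊢; omega : ¬ (((Fin.rev k : Fin n) : ℕ) < (i : ℕ))),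
          if_pos (by simp only [Fin.val_rev] at h ⊢; omega : (((Fin.rev k : Fin n) : ℕ) = (i : ℕ))),
          if_neg (by omega : ¬ ((k : ℕ) < ((Fin.rev i : Fin n) : ℕ))), if_pos h,
          star_mul, star_star, star_star]
        congr 1
        · congr 1
          ext
          simp only [Fin.val_rev, Fin.val_succ, Fin.coe_castSucc]
          omega
        · congr 1
          ext
          simp only [Fin.val_rev, Fin.val_succ, Fin.coe_castSucc]
          omega
      · rw [if_pos (by simp only [Fin.val_rev] at h ⊢; omega : (((Fin.rev k : Fin n) : ℕ) < (i : ℕ))),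
          if_neg (by omega : ¬ ((k : ℕ) < ((Fin.rev i : Fin n) : ℕ))),
          if_neg (by omega : ¬ ((k : ℕ) = ((Fin.rev i : Fin n) : ℕ))), star_star]
        congr 1
        ext
        simp only [Fin.val_rev, Fin.val_succ, Fin.coe_castSucc]
        omega
    have hS : ∑ i : Fin n, (-1 : ℂ) ^ ((i : ℕ) + 1) * starRingEnd ℂ
        (f fun j => if (j : ℕ) < (i : ℕ) then star (a j.castSucc.rev)
            else if (j : ℕ) = (i : ℕ) then star (a i.castSucc.rev) * star (a i.succ.rev)
            else star (a j.succ.rev))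
        = ∑ i : Fin n, (ε * (-1 : ℂ) ^ (n + 1)) * ((-1 : ℂ) ^ ((i : ℕ) + 1) *
            f (fun j => if (j : ℕ) < (i : ℕ) then a (Fin.castSucc j)
              else if (j : ℕ) = (i : ℕ) then a (Fin.castSucc i) * a i.succ
              else a j.succ)) := by
      refine Fintype.sum_bijective Fin.rev Fin.rev_bijective _ _ (fun i => ?_)
      rw [hB i]
      have hi := i.isLt
      have hsign : (-1 : ℂ) ^ (n + 1) * (-1 : ℂ) ^ (((Fin.rev i : Fin n) : ℕ) + 1)
          = (-1 : ℂ) ^ ((i : ℕ) + 1) := by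
        rw [← pow_add,
          show (n + 1) + (((Fin.rev i : Fin n) : ℕ) + 1) = ((i : ℕ) + 1) + 2 * (n - (i : ℕ)) from by
            simp only [Fin.val_rev]; omega,
          pow_add, pow_mul]
        norm_num
      rw [← hsign]
      ring
    rw [hA, hC, hS, ← Finset.mul_sum]
    have hp : (-1 : ℂ) ^ (n + 1) * (-1 : ℂ) ^ (n + 1) = 1 := by
      rw [← pow_add, ← two_mul, pow_mul]
      norm_num
    rw [Fin.rev_zero, Fin.rev_last]
    linear_combination (-(ε * (f fun j => a j.castSucc) * counit (R := ℂ) (a (Fin.last n)))) * hp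
  refine ⟨fun hodd a => ?_, fun heven a => ?_⟩
  · rw [key a, Even.neg_one_pow hodd.add_one, one_mul]
  · rw [key a, Odd.neg_one_pow heven.add_one]
    ring
end

section
/- Let B be a bialgebra and (Φ_t)_{t≥0} a pointwise continuous one-parameter semigroup of invertible unital linear maps on B satisfying (Φ_t⊗id)∘Δ = (id⊗Φ_t)∘Δ for all t. Then φ_t := δ∘Φ_t is a pointwise continuous convolution semigroup: φ_t ⋆ φ_s = φ_{t+s}, and Φ_t = R_{φ_t} = (id⊗φ_t)∘Δ. -/
open TensorProduct Coalgebra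

variable {B : Type} [Ring B] [Bialgebra ℂ B]

/-- `R_φ = (id ⊗ φ) ∘ Δ : B → B`. -/
noncomputable def Rmap (φ : B →ₗ[ℂ] ℂ) : B →ₗ[ℂ] B :=
  (TensorProduct.rid ℂ B).toLinearMap ∘ₗ TensorProduct.map LinearMap.id φ ∘ₗ comul

/-- Convolution of linear functionals: `φ ⋆ ψ = (φ ⊗ ψ) ∘ Δ`. -/
noncomputable def convF (φ ψ : B →ₗ[ℂ] ℂ) : B →ₗ[ℂ] ℂ :=
  LinearMap.mul' ℂ ℂ ∘ₗ TensorProduct.map φ ψ ∘ₗ comul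

/-- Let `(Φ_t)_{t≥0}` be a pointwise continuous one-parameter semigroup of invertible unital
linear maps on a bialgebra `B` with `(Φ_t ⊗ id) ∘ Δ = (id ⊗ Φ_t) ∘ Δ`.  Then
`φ_t := δ ∘ Φ_t` is a pointwise continuous convolution semigroup, `φ_t ⋆ φ_s = φ_{t+s}`,
and `Φ_t = R_{φ_t} = (id ⊗ φ_t) ∘ Δ`.  (Pointwise continuity of `Φ` is taken in the weak
sense: `t ↦ f(Φ_t b)` is continuous for every linear functional `f`.) -/
theorem stmt8 (Φ : ℝ → (B →ₗ[ℂ] B))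
    (hsemi : ∀ s t : ℝ, 0 ≤ s → 0 ≤ t → Φ t ∘ₗ Φ s = Φ (t + s))
    (hzero : Φ 0 = LinearMap.id)
    (hinv : ∀ t : ℝ, 0 ≤ t → Function.Bijective (Φ t))
    (hunit : ∀ t : ℝ, 0 ≤ t → Φ t 1 = 1)
    (hcont : ∀ (f : B →ₗ[ℂ] ℂ) (b : B), ContinuousOn (fun t : ℝ => f (Φ t b)) (Set.Ici 0))
    (hcomm : ∀ t : ℝ, 0 ≤ t →
      TensorProduct.map (Φ t) LinearMap.id ∘ₗ comul (R := ℂ)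
        = TensorProduct.map LinearMap.id (Φ t) ∘ₗ comul (R := ℂ)) :
    (∀ s t : ℝ, 0 ≤ s → 0 ≤ t →
        convF (counit (R := ℂ) ∘ₗ Φ t) (counit (R := ℂ) ∘ₗ Φ s)
          = counit (R := ℂ) ∘ₗ Φ (t + s)) ∧
    (∀ b : B, ContinuousOn (fun t : ℝ => (counit (R := ℂ) ∘ₗ Φ t) b) (Set.Ici 0)) ∧
    (∀ t : ℝ, 0 ≤ t → Φ t = Rmap (counit (R := ℂ) ∘ₗ Φ t)) := by
  -- `rid ∘ (id ⊗ counit) ∘ comul = id`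
  have hid : (TensorProduct.rid ℂ B).toLinearMap ∘ₗ
      TensorProduct.map LinearMap.id (counit (R := ℂ)) ∘ₗ comul = LinearMap.id := by
    ext b
    have : TensorProduct.map (LinearMap.id) (counit (R := ℂ)) (comul b)
        = (counit (R := ℂ)).lTensor B (comul b) := rfl
    simp [this, lTensor_counit_comul]
  have key : ∀ t : ℝ, 0 ≤ t → Φ t = Rmap (counit (R := ℂ) ∘ₗ Φ t) := by
    intro t ht
    have h1 : TensorProduct.map (LinearMap.id (M := B)) (counit (R := ℂ) ∘ₗ Φ t)
        = TensorProduct.map LinearMap.id (counit (R := ℂ)) ∘ₗ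
          TensorProduct.map LinearMap.id (Φ t) := by
      rw [← TensorProduct.map_comp]; rfl
    have h2 : (TensorProduct.rid ℂ B).toLinearMap ∘ₗ
        TensorProduct.map (LinearMap.id (M := B)) (counit (R := ℂ) (A := B)) ∘ₗ
          TensorProduct.map (Φ t) LinearMap.id
        = Φ t ∘ₗ (TensorProduct.rid ℂ B).toLinearMap ∘ₗ
            TensorProduct.map (LinearMap.id (M := B)) (counit (R := ℂ) (A := B)) := by
      apply TensorProduct.ext'
      intro x y
      simp [TensorProduct.smul_tmul', map_smul]
    calc Φ t = Φ t ∘ₗ LinearMap.id := rfl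
      _ = Φ t ∘ₗ (TensorProduct.rid ℂ B).toLinearMap ∘ₗ
            TensorProduct.map LinearMap.id (counit (R := ℂ)) ∘ₗ comul := by rw [hid]
      _ = ((TensorProduct.rid ℂ B).toLinearMap ∘ₗ
            TensorProduct.map LinearMap.id (counit (R := ℂ)) ∘ₗ
              TensorProduct.map (Φ t) LinearMap.id) ∘ₗ comul := by
          rw [h2]; ext b; simp
      _ = (TensorProduct.rid ℂ B).toLinearMap ∘ₗ
            TensorProduct.map LinearMap.id (counit (R := ℂ)) ∘ₗ
              (TensorProduct.map (Φ t) LinearMap.id ∘ₗ comul) := by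
          ext b; simp
      _ = (TensorProduct.rid ℂ B).toLinearMap ∘ₗ
            TensorProduct.map LinearMap.id (counit (R := ℂ)) ∘ₗ
              (TensorProduct.map LinearMap.id (Φ t) ∘ₗ comul) := by rw [hcomm t ht]
      _ = Rmap (counit (R := ℂ) ∘ₗ Φ t) := by
          rw [Rmap, h1]; ext b; simp
  refine ⟨?_, ?_, key⟩
  · intro s t hs ht
    have hmaps : TensorProduct.map (counit (R := ℂ) ∘ₗ Φ t) (counit (R := ℂ) ∘ₗ Φ s) ∘ₗ comul
        = TensorProduct.map (counit (R := ℂ)) (counit (R := ℂ)) ∘ₗ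
            TensorProduct.map (Φ (t + s)) LinearMap.id ∘ₗ comul := by
      rw [TensorProduct.map_comp]
      have : TensorProduct.map (Φ t) (Φ s)
          = TensorProduct.map (Φ t) LinearMap.id ∘ₗ TensorProduct.map LinearMap.id (Φ s) := by
        rw [← TensorProduct.map_comp]; rfl
      calc TensorProduct.map (counit (R := ℂ)) (counit (R := ℂ)) ∘ₗ
              TensorProduct.map (Φ t) (Φ s) ∘ₗ comul
          = TensorProduct.map (counit (R := ℂ)) (counit (R := ℂ)) ∘ₗ
              TensorProduct.map (Φ t) LinearMap.id ∘ₗ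
                (TensorProduct.map LinearMap.id (Φ s) ∘ₗ comul) := by
            rw [this]; ext b; simp
        _ = TensorProduct.map (counit (R := ℂ)) (counit (R := ℂ)) ∘ₗ
              TensorProduct.map (Φ t) LinearMap.id ∘ₗ
                (TensorProduct.map (Φ s) LinearMap.id ∘ₗ comul) := by rw [← hcomm s hs]
        _ = TensorProduct.map (counit (R := ℂ)) (counit (R := ℂ)) ∘ₗ
              TensorProduct.map (Φ (t + s)) LinearMap.id ∘ₗ comul := by
            rw [show TensorProduct.map (Φ (t + s)) (LinearMap.id (M := B))
                = TensorProduct.map (Φ t) LinearMap.id ∘ₗ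
                  TensorProduct.map (Φ s) LinearMap.id by
              rw [← TensorProduct.map_comp, hsemi s t hs ht]; rfl]
            ext b; simp
    have hmul : (LinearMap.mul' ℂ ℂ) ∘ₗ TensorProduct.map (counit (R := ℂ)) (counit (R := ℂ)) ∘ₗ
        TensorProduct.map (Φ (t + s)) LinearMap.id
        = (counit (R := ℂ) ∘ₗ Φ (t + s)) ∘ₗ (TensorProduct.rid ℂ B).toLinearMap ∘ₗ
            TensorProduct.map (LinearMap.id (M := B)) (counit (R := ℂ) (A := B)) := by
      apply TensorProduct.ext'
      intro x y
      simp [TensorProduct.smul_tmul', map_smul, mul_comm]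
    rw [convF, hmaps]
    calc LinearMap.mul' ℂ ℂ ∘ₗ TensorProduct.map (counit (R := ℂ)) (counit (R := ℂ)) ∘ₗ
            TensorProduct.map (Φ (t + s)) LinearMap.id ∘ₗ comul
        = ((LinearMap.mul' ℂ ℂ) ∘ₗ TensorProduct.map (counit (R := ℂ)) (counit (R := ℂ)) ∘ₗ
            TensorProduct.map (Φ (t + s)) LinearMap.id) ∘ₗ comul := by ext b; simp
      _ = (counit (R := ℂ) ∘ₗ Φ (t + s)) ∘ₗ (TensorProduct.rid ℂ B).toLinearMap ∘ₗ
            TensorProduct.map LinearMap.id (counit (R := ℂ)) ∘ₗ comul := by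
          rw [hmul]; ext b; simp
      _ = counit (R := ℂ) ∘ₗ Φ (t + s) := by rw [hid]; rfl
  · intro b
    exact hcont (counit (R := ℂ)) b
end

section
/- Let B be a Hopf algebra with antipode S and L a Hochschild 2-cocycle (for the trivial bimodule ℂ given by the counit). Then L∘(S⊗id)∘Δ = L∘(id⊗S)∘Δ. -/
open TensorProduct Coalgebra

/-- Let `B` be a Hopf algebra with antipode `S` and `L : B ⊗ B → ℂ` a Hochschild 2-cocycle
for the trivial bimodule `ℂ` given by the counit.  Then
`L ∘ (S ⊗ id) ∘ Δ = L ∘ (id ⊗ S) ∘ Δ`. -/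
theorem stmt13 {B : Type} [Ring B] [HopfAlgebra ℂ B]
    (L : B ⊗[ℂ] B →ₗ[ℂ] ℂ)
    (hcocycle : ∀ a b c : B,
      counit (R := ℂ) a * L (b ⊗ₜ[ℂ] c) - L ((a * b) ⊗ₜ[ℂ] c)
        + L (a ⊗ₜ[ℂ] (b * c)) - L (a ⊗ₜ[ℂ] b) * counit (R := ℂ) c = 0) :
    L ∘ₗ TensorProduct.map (HopfAlgebra.antipode (R := ℂ)) LinearMap.id ∘ₗ comul (R := ℂ)
      = L ∘ₗ TensorProduct.map LinearMap.id (HopfAlgebra.antipode (R := ℂ)) ∘ₗ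
          comul (R := ℂ) := by
  classical
  let S : B →ₗ[ℂ] B := HopfAlgebra.antipode (R := ℂ)
  let ε : B →ₗ[ℂ] ℂ := counit (R := ℂ)
  let Δ : B →ₗ[ℂ] B ⊗[ℂ] B := comul (R := ℂ)
  -- The cocycle identity, with `S` inserted in the middle slot, as a linear map on B⊗(B⊗B).
  let Φ : B ⊗[ℂ] (B ⊗[ℂ] B) →ₗ[ℂ] ℂ :=
    LinearMap.mul' ℂ ℂ ∘ₗ TensorProduct.map ε (L ∘ₗ S.rTensor B)
      - L ∘ₗ TensorProduct.map (LinearMap.mul' ℂ B ∘ₗ S.lTensor B) LinearMap.id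
          ∘ₗ (TensorProduct.assoc ℂ B B B).symm.toLinearMap
      + L ∘ₗ (LinearMap.mul' ℂ B ∘ₗ S.rTensor B).lTensor B
      - LinearMap.mul' ℂ ℂ ∘ₗ TensorProduct.map (L ∘ₗ S.lTensor B) ε
          ∘ₗ (TensorProduct.assoc ℂ B B B).symm.toLinearMap
  have hΦ : Φ = 0 := by
    apply TensorProduct.ext
    apply LinearMap.ext; intro a
    apply TensorProduct.ext'
    intro b c
    simpa [Φ, S, ε, LinearMap.mul'_apply] using hcocycle a (S b) c
  ext x
  have h0 : Φ ((Δ.lTensor B) (Δ x)) = 0 := by rw [hΦ]; rfl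
  -- compute the four terms of `Φ` at `(id ⊗ Δ)(Δ x)`
  have t1 : LinearMap.mul' ℂ ℂ
      (TensorProduct.map ε (L ∘ₗ S.rTensor B) ((Δ.lTensor B) (Δ x)))
        = L (S.rTensor B (Δ x)) := by
    rw [← LinearMap.comp_apply (TensorProduct.map _ _), LinearMap.map_comp_lTensor,
      ← LinearMap.lTensor_comp_rTensor, LinearMap.comp_apply]
    have : ε.rTensor B (Δ x) = (1 : ℂ) ⊗ₜ[ℂ] x := Coalgebra.rTensor_counit_comul x
    rw [this, LinearMap.lTensor_tmul, LinearMap.mul'_apply, one_mul, LinearMap.comp_apply]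
    rfl
  have t2 : L (TensorProduct.map (LinearMap.mul' ℂ B ∘ₗ S.lTensor B) LinearMap.id
      ((TensorProduct.assoc ℂ B B B).symm ((Δ.lTensor B) (Δ x))))
        = L ((1 : B) ⊗ₜ[ℂ] x) := by
    rw [Coalgebra.coassoc_symm_apply, ← LinearMap.comp_apply (TensorProduct.map _ _),
      LinearMap.map_comp_rTensor]
    have hA : (LinearMap.mul' ℂ B ∘ₗ S.lTensor B) ∘ₗ Δ
        = Algebra.linearMap ℂ B ∘ₗ ε := by
      simpa [S, ε, Δ, LinearMap.comp_assoc] using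
        HopfAlgebra.mul_antipode_lTensor_comul (R := ℂ) (A := B)
    rw [hA]
    have : TensorProduct.map (Algebra.linearMap ℂ B ∘ₗ ε) (LinearMap.id (M := B))
        = (Algebra.linearMap ℂ B).rTensor B ∘ₗ ε.rTensor B := by
      simp [LinearMap.rTensor, ← TensorProduct.map_comp]
    rw [this, LinearMap.comp_apply]
    have h1 : ε.rTensor B (Δ x) = (1 : ℂ) ⊗ₜ[ℂ] x := Coalgebra.rTensor_counit_comul x
    rw [h1, LinearMap.rTensor_tmul]
    simp
  have t3 : L ((LinearMap.mul' ℂ B ∘ₗ S.rTensor B).lTensor B ((Δ.lTensor B) (Δ x)))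
      = L (x ⊗ₜ[ℂ] (1 : B)) := by
    rw [← LinearMap.lTensor_comp_apply]
    have hA : (LinearMap.mul' ℂ B ∘ₗ S.rTensor B) ∘ₗ Δ
        = Algebra.linearMap ℂ B ∘ₗ ε := by
      simpa [S, ε, Δ, LinearMap.comp_assoc] using
        HopfAlgebra.mul_antipode_rTensor_comul (R := ℂ) (A := B)
    rw [hA, LinearMap.lTensor_comp, LinearMap.comp_apply]
    have h1 : ε.lTensor B (Δ x) = x ⊗ₜ[ℂ] (1 : ℂ) := Coalgebra.lTensor_counit_comul x
    rw [h1, LinearMap.lTensor_tmul]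
    simp
  have t4 : LinearMap.mul' ℂ ℂ (TensorProduct.map (L ∘ₗ S.lTensor B) ε
      ((TensorProduct.assoc ℂ B B B).symm ((Δ.lTensor B) (Δ x))))
        = L (S.lTensor B (Δ x)) := by
    rw [Coalgebra.coassoc_symm_apply, ← LinearMap.comp_apply (TensorProduct.map _ _),
      LinearMap.map_comp_rTensor, ← LinearMap.rTensor_comp_lTensor, LinearMap.comp_apply]
    have h1 : ε.lTensor B (Δ x) = x ⊗ₜ[ℂ] (1 : ℂ) := Coalgebra.lTensor_counit_comul x
    rw [h1, LinearMap.rTensor_tmul, LinearMap.mul'_apply, mul_one, LinearMap.comp_apply]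
    rfl
  have key : L (S.rTensor B (Δ x)) - L ((1 : B) ⊗ₜ[ℂ] x) + L (x ⊗ₜ[ℂ] (1 : B))
      - L (S.lTensor B (Δ x)) = 0 := by
    have := h0
    simp only [Φ, LinearMap.sub_apply, LinearMap.add_apply, LinearMap.comp_apply,
      LinearEquiv.coe_coe] at this
    rw [t1, t2, t3, t4] at this
    exact this
  have h1x : L ((1 : B) ⊗ₜ[ℂ] x) = L ((1 : B) ⊗ₜ[ℂ] (1 : B)) * ε x := by
    have := hcocycle 1 1 x
    simp only [one_mul, mul_one] at this
    have hε1 : counit (R := ℂ) (1 : B) = 1 := Bialgebra.counit_one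
    rw [hε1, one_mul] at this
    linear_combination this
  have hx1 : L (x ⊗ₜ[ℂ] (1 : B)) = L ((1 : B) ⊗ₜ[ℂ] (1 : B)) * ε x := by
    have := hcocycle x 1 1
    simp only [one_mul, mul_one] at this
    have hε1 : counit (R := ℂ) (1 : B) = 1 := Bialgebra.counit_one
    rw [hε1, mul_one] at this
    linear_combination -this + mul_comm (ε x) (L ((1 : B) ⊗ₜ[ℂ] (1 : B)))
  have final : L (S.rTensor B (Δ x)) = L (S.lTensor B (Δ x)) := by
    linear_combination key + h1x - hx1
  simpa [S, Δ, LinearMap.rTensor, LinearMap.lTensor] using final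
end
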